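/- arXiv:1704.06768 — 8 statements merged into one kernel-verified Lean document; each statement's English description precedes it below -/
import Mathlib

section
/- Let n ≥ 1 be an integer and θ > 0 a real number. Then n/(2(θ+n)) ≤ (∑_{j=1}^n θ/(θ+j−1)) − θ·log(1 + n/θ) ≤ n/(θ+n). -/
/-!
Write `a_k = θ + k`. Since `θ * log (1 + n / θ) = θ * ∑_{k < n} (log (a_k + 1) - log a_k)`, the
quantity to bound is `θ * ∑_{k < n} (a_k⁻¹ - ∫_{a_k}^{a_k + 1} dx / x)`. As `1 / x` is decreasing
and convex, each integral lies between the right-endpoint value `(a_k + 1)⁻¹` and the trapezoid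
value `(a_k⁻¹ + (a_k + 1)⁻¹) / 2`, so the `k`-th summand lies between `(a_k⁻¹ - (a_k + 1)⁻¹) / 2`
and `a_k⁻¹ - (a_k + 1)⁻¹`. These bounds telescope to `(θ⁻¹ - (θ + n)⁻¹) / 2` and
`θ⁻¹ - (θ + n)⁻¹`, and `θ * (θ⁻¹ - (θ + n)⁻¹) = n / (θ + n)`.
-/

open Finset

namespace Real

lemma log_le_sub_inv_div_two {y : ℝ} (hy : 1 ≤ y) : log y ≤ (y - y⁻¹) / 2 := by
  rw [← sinh_log (by linarith)]
  exact self_le_sinh_iff.2 (log_nonneg hy)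

lemma inv_add_one_le_log_add_one_sub_log {a : ℝ} (ha : 0 < a) :
    (a + 1)⁻¹ ≤ log (a + 1) - log a := by
  rw [← log_div (by positivity) ha.ne']
  convert one_sub_inv_le_log_of_pos (x := (a + 1) / a) (by positivity) using 1
  field_simp
  ring

lemma log_add_one_sub_log_le {a : ℝ} (ha : 0 < a) :
    log (a + 1) - log a ≤ (a⁻¹ + (a + 1)⁻¹) / 2 := by
  rw [← log_div (by positivity) ha.ne']
  convert log_le_sub_inv_div_two (y := (a + 1) / a) (by rw [le_div_iff₀ ha]; linarith) using 1
  field_simp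
  ring

end Real

open Real

lemma sum_Icc_div_sub_mul_log_eq {θ : ℝ} (hθ : 0 < θ) (n : ℕ) :
    (∑ j ∈ Icc 1 n, θ / (θ + (j : ℝ) - 1)) - θ * log (1 + n / θ) =
      θ * ∑ k ∈ range n, ((θ + k)⁻¹ - (log (θ + k + 1) - log (θ + k))) := by
  have hlog : log (1 + n / θ) = ∑ k ∈ range n, (log (θ + k + 1) - log (θ + k)) := by
    have htel := sum_range_sub (fun k : ℕ => log (θ + k)) n
    simp only [Nat.cast_succ, ← add_assoc, Nat.cast_zero, add_zero] at htel
    rw [htel, ← log_div (by positivity) hθ.ne']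
    congr 1
    field_simp
  have hIcc : ∑ j ∈ Icc 1 n, θ / (θ + (j : ℝ) - 1) = ∑ k ∈ range n, θ * (θ + k)⁻¹ := by
    rw [← Ico_add_one_right_eq_Icc, sum_Ico_eq_sum_range, Nat.add_sub_cancel]
    refine sum_congr rfl fun k _ => ?_
    push_cast
    ring
  rw [hIcc, hlog, mul_sum, mul_sum, ← sum_sub_distrib]
  simp only [mul_sub]

lemma mul_sum_range_inv_sub_inv_eq {θ : ℝ} (hθ : 0 < θ) (n : ℕ) :
    θ * ∑ k ∈ range n, ((θ + k)⁻¹ - (θ + k + 1)⁻¹) = n / (θ + n) := by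
  have htel := sum_range_sub' (fun k : ℕ => (θ + k)⁻¹) n
  simp only [Nat.cast_succ, ← add_assoc, Nat.cast_zero, add_zero] at htel
  rw [htel]
  field_simp
  ring

theorem stmt_0_general (n : ℕ) (θ : ℝ) (hθ : 0 < θ) :
    (n : ℝ) / (2 * (θ + n)) ≤
      (∑ j ∈ Finset.Icc 1 n, θ / (θ + (j : ℝ) - 1)) - θ * Real.log (1 + n / θ) ∧
    (∑ j ∈ Finset.Icc 1 n, θ / (θ + (j : ℝ) - 1)) - θ * Real.log (1 + n / θ) ≤
      (n : ℝ) / (θ + n) := by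
  have ha : ∀ k : ℕ, 0 < θ + k := fun k => by positivity
  rw [sum_Icc_div_sub_mul_log_eq hθ, div_mul_eq_div_div_swap, ← mul_sum_range_inv_sub_inv_eq hθ,
    mul_div_assoc, sum_div]
  constructor
  · gcongr with k
    linarith [log_add_one_sub_log_le (ha k)]
  · gcongr with k
    linarith [inv_add_one_le_log_add_one_sub_log (ha k)]

theorem stmt_0 (n : ℕ) (hn : 1 ≤ n) (θ : ℝ) (hθ : 0 < θ) :
    (n : ℝ) / (2 * (θ + n)) ≤
      (∑ j ∈ Finset.Icc 1 n, θ / (θ + (j : ℝ) - 1)) - θ * Real.log (1 + n / θ) ∧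
    (∑ j ∈ Finset.Icc 1 n, θ / (θ + (j : ℝ) - 1)) - θ * Real.log (1 + n / θ) ≤
      (n : ℝ) / (θ + n) :=
  stmt_0_general n θ hθ
end

section
/- Let n ≥ 1 be an integer and θ > 0 a real number. Then 0 ≤ (∑_{j=1}^n (θ/(θ+j−1))²) − nθ/(n+θ) ≤ 1. -/
private lemma lb_aux (θ : ℝ) (hθ : 0 < θ) :
    ∀ n : ℕ, 1 ≤ n →
      (n : ℝ) * θ / (n + θ) ≤ ∑ j ∈ Finset.Icc 1 n, (θ / (θ + (j : ℝ) - 1)) ^ 2 := by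
  intro n hn
  induction n, hn using Nat.le_induction with
  | base =>
    simp only [Finset.Icc_self, Finset.sum_singleton]
    push_cast
    have h : θ + (1:ℝ) - 1 = θ := by ring
    rw [h, div_self hθ.ne', one_pow, div_le_one (by linarith)]
    linarith
  | succ n hn ih =>
    rw [Finset.sum_Icc_succ_top (by omega : 1 ≤ n + 1)]
    have hn1 : (1:ℝ) ≤ (n:ℝ) := by exact_mod_cast hn
    push_cast
    have h1 : (0:ℝ) < (n:ℝ) + θ := by linarith
    have h2 : (0:ℝ) < (n:ℝ) + 1 + θ := by linarith
    have h3 : θ + ((n:ℝ) + 1) - 1 = (n:ℝ) + θ := by ring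
    rw [h3]
    have key : ((n:ℝ) + 1) * θ / ((n:ℝ) + 1 + θ) ≤
        (n : ℝ) * θ / (n + θ) + (θ / ((n:ℝ) + θ)) ^ 2 := by
      rw [div_pow, div_add_div _ _ h1.ne' (by positivity),
        div_le_div_iff₀ h2 (by positivity)]
      nlinarith [sq_nonneg θ, mul_pos h1 h2, mul_pos hθ h1, sq_nonneg ((n:ℝ)+θ)]
    linarith [ih]

private lemma ub_aux (θ : ℝ) (hθ : 0 < θ) :
    ∀ n : ℕ, 1 ≤ n →
      ∑ j ∈ Finset.Icc 1 n, (θ / (θ + (j : ℝ) - 1)) ^ 2 ≤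
        1 + θ * ((n : ℝ) - 1) / (θ + (n : ℝ) - 1) := by
  intro n hn
  induction n, hn using Nat.le_induction with
  | base =>
    simp only [Finset.Icc_self, Finset.sum_singleton]
    push_cast
    have h : θ + (1:ℝ) - 1 = θ := by ring
    rw [h, div_self hθ.ne']
    norm_num
  | succ n hn ih =>
    rw [Finset.sum_Icc_succ_top (by omega : 1 ≤ n + 1)]
    have hn1 : (1:ℝ) ≤ (n:ℝ) := by exact_mod_cast hn
    push_cast
    have h1 : (0:ℝ) < (n:ℝ) + θ := by linarith
    have h0 : (0:ℝ) < θ + (n:ℝ) - 1 := by linarith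
    have h3 : θ + ((n:ℝ) + 1) - 1 = (n:ℝ) + θ := by ring
    rw [h3]
    have key : θ * ((n:ℝ) - 1) / (θ + (n:ℝ) - 1) + (θ / ((n:ℝ) + θ)) ^ 2 ≤
        θ * ((n:ℝ) + 1 - 1) / ((n:ℝ) + θ) := by
      rw [div_pow, div_add_div _ _ h0.ne' (by positivity),
        div_le_div_iff₀ (by positivity) h1]
      nlinarith [sq_nonneg θ, mul_pos h0 h1, mul_pos hθ h1, sq_nonneg ((n:ℝ)+θ),
        mul_pos (mul_pos h0 h1) h1]
    linarith [ih]

theorem stmt_1 (n : ℕ) (hn : 1 ≤ n) (θ : ℝ) (hθ : 0 < θ) :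
    0 ≤ (∑ j ∈ Finset.Icc 1 n, (θ / (θ + (j : ℝ) - 1)) ^ 2) - n * θ / (n + θ) ∧
    (∑ j ∈ Finset.Icc 1 n, (θ / (θ + (j : ℝ) - 1)) ^ 2) - n * θ / (n + θ) ≤ 1 := by
  have hn1 : (1:ℝ) ≤ (n:ℝ) := by exact_mod_cast hn
  have h1 : (0:ℝ) < (n:ℝ) + θ := by linarith
  have h0 : (0:ℝ) < θ + (n:ℝ) - 1 := by linarith
  constructor
  · have := lb_aux θ hθ n hn
    linarith
  · have hub := ub_aux θ hθ n hn
    have key : θ * ((n:ℝ) - 1) / (θ + (n:ℝ) - 1) ≤ (n:ℝ) * θ / ((n:ℝ) + θ) := by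
      rw [div_le_div_iff₀ h0 h1]
      nlinarith
    linarith
end

section
/- Let θ : ℕ → ℝ be positive and nondecreasing with n/θ_n → 0 as n → ∞ (Case C). Then ∑_{j=1}^n θ_n/(θ_n+j−1) − ∑_{j=1}^n (θ_n/j)·(n/θ_n)^j = O(n²/θ_n); that is, there exist a constant C and an index N such that for all n ≥ N, |∑_{j=1}^n θ_n/(θ_n+j−1) − ∑_{j=1}^n (θ_n/j)·(n/θ_n)^j| ≤ C·n²/θ_n. -/
/-! With `x = n / θ ≤ 1 / 2` both sums are `n + O(n² / θ)`: the first because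
`1 - θ / (θ + j - 1) ≤ n / θ` for each of its `n` terms, the second because its `j = 1` term is
`θ x = n` and the rest is at most `θ ∑_{j ≥ 2} x ^ j ≤ 2 θ x² = 2 n² / θ`. -/

open Finset

lemma abs_sum_div_add_sub_one_sub_le {t : ℝ} (ht : 0 < t) (n : ℕ) :
    |∑ j ∈ Icc 1 n, t / (t + j - 1) - n| ≤ n ^ 2 / t := by
  have hterm : ∀ j ∈ Icc 1 n, |t / (t + j - 1) - 1| ≤ n / t := by
    intro j hj
    obtain ⟨hj1, hjn⟩ := mem_Icc.mp hj
    have hj1' : (1 : ℝ) ≤ j := by exact_mod_cast hj1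
    have hjn' : (j : ℝ) ≤ n := by exact_mod_cast hjn
    have hden : 0 < t + j - 1 := by linarith
    rw [abs_sub_comm, abs_of_nonneg (by rw [sub_nonneg, div_le_one hden]; linarith),
      one_sub_div hden.ne']
    exact div_le_div₀ (Nat.cast_nonneg n) (by linarith) ht (by linarith)
  calc |∑ j ∈ Icc 1 n, t / (t + j - 1) - n|
      = |∑ j ∈ Icc 1 n, (t / (t + j - 1) - 1)| := by simp [sum_sub_distrib]
    _ ≤ ∑ j ∈ Icc 1 n, |t / (t + j - 1) - 1| := abs_sum_le_sum_abs _ _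
    _ ≤ n * (n / t) := by simpa using sum_le_card_nsmul _ _ _ hterm
    _ = n ^ 2 / t := by ring

lemma sum_pow_Ioc_one_le {x : ℝ} (hx0 : 0 ≤ x) (hx : x ≤ 1 / 2) (n : ℕ) :
    ∑ j ∈ Ioc 1 n, x ^ j ≤ 2 * x ^ 2 := by
  have hIoc : Ioc 1 n = Ico 2 (n + 1) := by ext; simp; omega
  calc ∑ j ∈ Ioc 1 n, x ^ j ≤ x ^ 2 / (1 - x) :=
        hIoc ▸ geom_sum_Ico_le_of_lt_one hx0 (by linarith)
    _ ≤ 2 * x ^ 2 := by rw [div_le_iff₀ (by linarith)]; nlinarith [sq_nonneg x]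

lemma abs_sum_div_mul_pow_sub_le {t x : ℝ} (ht : 0 ≤ t) (hx0 : 0 ≤ x) (hx : x ≤ 1 / 2)
    {n : ℕ} (hn : 1 ≤ n) :
    |∑ j ∈ Icc 1 n, t / j * x ^ j - t * x| ≤ 2 * t * x ^ 2 := by
  rw [← add_sum_Ioc_eq_sum_Icc hn]
  simp only [Nat.cast_one, div_one, pow_one, add_sub_cancel_left]
  have htail : ∀ j ∈ Ioc 1 n, t / j * x ^ j ≤ t * x ^ j := fun j hj => by
    have hj : (1 : ℝ) ≤ j := by exact_mod_cast (mem_Ioc.mp hj).1.le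
    gcongr
    exact div_le_self ht hj
  rw [abs_of_nonneg (sum_nonneg fun j _ => by positivity)]
  calc ∑ j ∈ Ioc 1 n, t / j * x ^ j ≤ ∑ j ∈ Ioc 1 n, t * x ^ j := sum_le_sum htail
    _ = t * ∑ j ∈ Ioc 1 n, x ^ j := (mul_sum _ _ _).symm
    _ ≤ t * (2 * x ^ 2) := by gcongr; exact sum_pow_Ioc_one_le hx0 hx n
    _ = 2 * t * x ^ 2 := by ring

theorem stmt_5_general (θ : ℕ → ℝ) (hpos : ∀ n, 0 < θ n)
    (hC : Filter.Tendsto (fun n : ℕ => (n : ℝ) / θ n) Filter.atTop (nhds 0)) :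
    ∃ C : ℝ, ∃ N : ℕ, ∀ n ≥ N,
      |(∑ j ∈ Finset.Icc 1 n, θ n / (θ n + (j : ℝ) - 1)) -
          ∑ j ∈ Finset.Icc 1 n, (θ n / (j : ℝ)) * ((n : ℝ) / θ n) ^ j| ≤
        C * ((n : ℝ) ^ 2 / θ n) := by
  obtain ⟨N, hN⟩ := Filter.eventually_atTop.mp
    ((hC.eventually (Iic_mem_nhds (by norm_num : (0 : ℝ) < 1 / 2))).and
      (Filter.eventually_ge_atTop 1))
  refine ⟨3, N, fun n hn => ?_⟩
  obtain ⟨hxle, hn1⟩ := hN n hn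
  have ht := hpos n
  have hx0 : 0 ≤ (n : ℝ) / θ n := by positivity
  have hA := abs_sum_div_add_sub_one_sub_le ht n
  have hB := abs_sum_div_mul_pow_sub_le ht.le hx0 hxle hn1
  rw [mul_div_cancel₀ _ ht.ne'] at hB
  have hsq : 2 * θ n * ((n : ℝ) / θ n) ^ 2 = 2 * ((n : ℝ) ^ 2 / θ n) := by field_simp
  exact (abs_sub_le _ (n : ℝ) _).trans (by rw [abs_sub_comm (n : ℝ)]; linarith)

theorem stmt_5 (θ : ℕ → ℝ) (hpos : ∀ n, 0 < θ n) (hmono : Monotone θ)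
    (hC : Filter.Tendsto (fun n : ℕ => (n : ℝ) / θ n) Filter.atTop (nhds 0)) :
    ∃ C : ℝ, ∃ N : ℕ, ∀ n ≥ N,
      |(∑ j ∈ Finset.Icc 1 n, θ n / (θ n + (j : ℝ) - 1)) -
          ∑ j ∈ Finset.Icc 1 n, (θ n / (j : ℝ)) * ((n : ℝ) / θ n) ^ j| ≤
        C * ((n : ℝ) ^ 2 / θ n) :=
  stmt_5_general θ hpos hC
end

section
/- Let n ≥ 1 be an integer and θ > 0 a real number, and set p_j = θ/(θ+j−1) for j = 1,…,n. Let ξ_1,…,ξ_n be independent {0,1}-valued random variables with P(ξ_j = 1) = p_j, let K = ∑_{j=1}^n ξ_j, and let λ = ∑_{j=1}^n p_j. Then the total variation distance between the law of K and the Poisson distribution with mean λ satisfies d_TV(K, Poisson(λ)) ≤ (nθ + n + θ)/(θ(n+θ)·log(1+n/θ) + n/2). -/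
/-!
Stein–Chen method. For `f : ℕ → [0, 1]` the function
`g k = (∑ i < k, π i (f i - E f(Po r))) / (k π k)`, with `π` the Poisson weights, solves
`r g (k + 1) - k g k = f k - E f(Po r)`, and log-concavity of `π` gives
`g (k + 2) - g (k + 1) ≤ 1 / r`. For a sum `K` of independent Bernoulli variables `ξ j` with
means `p j` summing to `r`, independence of `ξ j` from `K - ξ j` turns `E (r g (K + 1) - K g K)`
into `∑ p j ^ 2 E (g (K - ξ j + 2) - g (K - ξ j + 1))`; taking for `f` the indicator of the set
where the law of `K` exceeds `Po r` bounds the total variation distance by `∑ p j ^ 2 / r`.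
For `p j = θ / (θ + j - 1)`, telescoping gives `∑ p j ^ 2 ≤ (nθ + n + θ) / (n + θ)` and the
trapezoid rule for `1 / x` gives `r ≥ θ log (1 + n / θ) + n / (2 (n + θ))`.
-/

open MeasureTheory ProbabilityTheory Finset
open scoped NNReal

section Countable

variable {X : Type*} [MeasurableSpace X] [Countable X] [MeasurableSingletonClass X]

lemma hasSum_measureReal_singleton_mul_indicator (ν : Measure X) [IsFiniteMeasure ν]
    (A : Set X) : HasSum (fun x ↦ ν.real {x} * A.indicator 1 x) (ν.real A) := by
  have hA : MeasurableSet A := A.to_countable.measurableSet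
  have hle (x : X) : ν.real {x} * A.indicator 1 x ≤ ν.real {x} :=
    mul_le_of_le_one_right measureReal_nonneg (Set.indicator_le_self' (fun _ _ ↦ zero_le_one) x)
  have hsum : Summable fun x ↦ ν.real {x} * A.indicator 1 x :=
    summable_of_sum_le (c := ν.real Set.univ)
      (fun x ↦ mul_nonneg measureReal_nonneg (Set.indicator_nonneg (fun _ _ ↦ zero_le_one) x))
      fun s ↦ (sum_le_sum fun x _ ↦ hle x).trans <| by
        rw [sum_measureReal_singleton]; exact measureReal_mono (Set.subset_univ _)
  convert hsum.hasSum
  rw [← integral_indicator_one hA, integral_countable ((integrable_const 1).indicator hA)]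
  rfl

lemma half_tsum_abs_sub_measureReal_singleton (ν₁ ν₂ : Measure X) [IsProbabilityMeasure ν₁]
    [IsProbabilityMeasure ν₂] :
    (1 / 2) * ∑' x, |ν₁.real {x} - ν₂.real {x}| =
      ν₁.real {x | ν₂.real {x} ≤ ν₁.real {x}} - ν₂.real {x | ν₂.real {x} ≤ ν₁.real {x}} := by
  set A := {x | ν₂.real {x} ≤ ν₁.real {x}}
  have hone (ν : Measure X) [IsProbabilityMeasure ν] : HasSum (fun x ↦ ν.real {x}) 1 := by
    simpa using hasSum_measureReal_singleton_mul_indicator ν Set.univ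
  have habs (x : X) : |ν₁.real {x} - ν₂.real {x}| = 2 * (ν₁.real {x} * A.indicator 1 x
      - ν₂.real {x} * A.indicator 1 x) - (ν₁.real {x} - ν₂.real {x}) := by
    by_cases hx : x ∈ A
    · rw [Set.indicator_of_mem hx, abs_of_nonneg (sub_nonneg.2 hx), Pi.one_apply]; ring
    · rw [Set.indicator_of_notMem hx, abs_of_neg (sub_neg.2 (not_le.1 hx))]; ring
  rw [funext habs, ((((hasSum_measureReal_singleton_mul_indicator ν₁ A).sub
    (hasSum_measureReal_singleton_mul_indicator ν₂ A)).mul_left 2).sub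
    ((hone ν₁).sub (hone ν₂))).tsum_eq]
  ring

end Countable

section Poisson

variable (r : ℝ≥0)

lemma succ_mul_poissonMeasure_real_succ (k : ℕ) :
    (k + 1) * Po(r).real {k + 1} = r * Po(r).real {k} := by
  simp only [poissonMeasure_real_singleton, Nat.factorial_succ, Nat.cast_mul, pow_succ]
  field_simp
  push_cast
  ring

lemma summable_poissonMeasure_real : Summable fun n ↦ Po(r).real {n} := by
  simpa only [poissonMeasure_real_singleton] using (hasSum_one_poissonMeasure r).summable

lemma integral_poissonMeasure_eq_tsum (f : ℕ → ℝ) :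
    ∫ n, f n ∂Po(r) = ∑' n, Po(r).real {n} * f n := by
  simp [integral_poissonMeasure, poissonMeasure_real_singleton]

lemma poissonMeasure_real_succ_mul_le {i j : ℕ} (hij : i ≤ j) :
    Po(r).real {j + 1} * Po(r).real {i} ≤ Po(r).real {j} * Po(r).real {i + 1} := by
  have hij' : (i : ℝ) + 1 ≤ j + 1 := by exact_mod_cast Nat.succ_le_succ hij
  refine le_of_mul_le_mul_left ?_ (by positivity : (0 : ℝ) < j + 1)
  calc (j + 1) * (Po(r).real {j + 1} * Po(r).real {i})
      = r * Po(r).real {j} * Po(r).real {i} := by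
        rw [← mul_assoc, succ_mul_poissonMeasure_real_succ]
    _ = Po(r).real {j} * ((i + 1) * Po(r).real {i + 1}) := by
        rw [succ_mul_poissonMeasure_real_succ]; ring
    _ ≤ Po(r).real {j} * ((j + 1) * Po(r).real {i + 1}) := by gcongr
    _ = (j + 1) * (Po(r).real {j} * Po(r).real {i + 1}) := by ring

lemma poissonMeasure_real_succ_mul_sum_le (k : ℕ) :
    Po(r).real {k + 1} * ∑ i ∈ range (k + 1), Po(r).real {i} ≤
      Po(r).real {k} * ∑ i ∈ range (k + 2), Po(r).real {i} :=
  calc Po(r).real {k + 1} * ∑ i ∈ range (k + 1), Po(r).real {i}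
      ≤ ∑ i ∈ range (k + 1), Po(r).real {k} * Po(r).real {i + 1} := by
        rw [mul_sum]
        exact sum_le_sum fun i hi ↦
          poissonMeasure_real_succ_mul_le r (Nat.lt_succ_iff.1 (mem_range.1 hi))
    _ ≤ Po(r).real {k} * ∑ i ∈ range (k + 2), Po(r).real {i} := by
        rw [← mul_sum, sum_range_succ' _ (k + 1)]
        exact mul_le_mul_of_nonneg_left (le_add_of_nonneg_right measureReal_nonneg)
          measureReal_nonneg

lemma poissonMeasure_real_mul_tsum_le (k : ℕ) :
    Po(r).real {k} * ∑' i, Po(r).real {i + (k + 2)} ≤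
      Po(r).real {k + 1} * ∑' i, Po(r).real {i + (k + 1)} := by
  have hsum (m : ℕ) : Summable fun i ↦ Po(r).real {i + m} :=
    (summable_poissonMeasure_real r).comp_injective (add_left_injective m)
  rw [← tsum_mul_left, ← tsum_mul_left]
  refine Summable.tsum_le_tsum (fun i ↦ ?_) ((hsum _).mul_left _) ((hsum _).mul_left _)
  rw [mul_comm, mul_comm (Po(r).real {k + 1}), show i + (k + 2) = i + (k + 1) + 1 by ring]
  exact poissonMeasure_real_succ_mul_le r (by omega)

end Poisson

section Stein

-- The left side is `r p q` times the Stein increment at `k`, with `p, q` the Poisson weights at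
-- `k, k + 1`, `F, G` the masses of `[0, k]`, `[k + 2, ∞)` and `S, t, R` the matching parts of `E f`.
lemma sub_mul_sub_le_of_mul_le {p q F G S t R : ℝ} (hp : 0 ≤ p) (hq : 0 ≤ q) (hF₀ : 0 ≤ F)
    (hG₀ : 0 ≤ G) (hone : F + q + G = 1) (hF : q * F ≤ p * (F + q)) (hG : p * G ≤ q * (q + G))
    (hS : 0 ≤ S) (ht : t ≤ q) (hR : 0 ≤ R) :
    p * (S + t - (S + t + R) * (F + q)) - q * (S - (S + t + R) * F) ≤ p * q := by
  have hβ : p * G + q * F ≤ p := by linear_combination hF + p * hone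
  have hβ₀ : 0 ≤ p * G + q * F := by positivity
  have hdecomp : p * (S + t - (S + t + R) * (F + q)) - q * (S - (S + t + R) * F) =
      S * (p * G - q * (q + G)) + t * (p * G + q * F) + R * (q * F - p * (F + q)) := by
    linear_combination (-(S * (p - q) + t * p)) * hone
  rw [hdecomp]
  linarith [mul_nonpos_of_nonneg_of_nonpos hS (sub_nonpos.2 hG),
    mul_nonpos_of_nonneg_of_nonpos hR (sub_nonpos.2 hF),
    mul_le_mul_of_nonneg_right ht hβ₀, mul_le_mul_of_nonneg_left hβ hq]

variable {r : ℝ≥0}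

variable (r) in
noncomputable def steinSolution (f : ℕ → ℝ) (k : ℕ) : ℝ :=
  (∑ i ∈ range k, Po(r).real {i} * (f i - ∫ n, f n ∂Po(r))) / (k * Po(r).real {k})

lemma steinSolution_succ (f : ℕ → ℝ) (k : ℕ) :
    steinSolution r f (k + 1) =
      (∑ i ∈ range (k + 1), Po(r).real {i} * (f i - ∫ n, f n ∂Po(r))) / (r * Po(r).real {k}) := by
  rw [steinSolution, Nat.cast_succ, succ_mul_poissonMeasure_real_succ]

lemma steinSolution_equation (hr : 0 < r) (f : ℕ → ℝ) (k : ℕ) :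
    r * steinSolution r f (k + 1) - k * steinSolution r f k = f k - ∫ n, f n ∂Po(r) := by
  have hpos : 0 < Po(r).real {k} := poissonMeasure_real_singleton_pos k hr
  rw [steinSolution_succ, sum_range_succ]
  rcases k.eq_zero_or_pos with rfl | hk
  · field_simp
    simp
  · have hk : (k : ℝ) ≠ 0 := by positivity
    rw [steinSolution]
    field_simp
    ring

lemma steinSolution_succ_succ_sub_le (hr : 0 < r) {f : ℕ → ℝ} (hf : ∀ k, f k ∈ Set.Icc 0 1)
    (k : ℕ) : steinSolution r f (k + 2) - steinSolution r f (k + 1) ≤ (r : ℝ)⁻¹ := by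
  set μ := ∫ n, f n ∂Po(r)
  set p := Po(r).real {k}
  set q := Po(r).real {k + 1}
  set F := ∑ i ∈ range (k + 1), Po(r).real {i}
  set G := ∑' i, Po(r).real {i + (k + 2)}
  set S := ∑ i ∈ range (k + 1), Po(r).real {i} * f i
  set t := q * f (k + 1)
  set R := ∑' i, Po(r).real {i + (k + 2)} * f (i + (k + 2))
  have hπ := summable_poissonMeasure_real r
  have hπf : Summable fun i ↦ Po(r).real {i} * f i :=
    hπ.of_nonneg_of_le (fun i ↦ mul_nonneg measureReal_nonneg (hf i).1)
      fun i ↦ mul_le_of_le_one_right measureReal_nonneg (hf i).2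
  have hp : 0 < p := poissonMeasure_real_singleton_pos k hr
  have hq : 0 < q := poissonMeasure_real_singleton_pos (k + 1) hr
  have hμ : μ = S + t + R := by
    rw [← sum_range_succ (fun i ↦ Po(r).real {i} * f i), hπf.sum_add_tsum_nat_add]
    exact integral_poissonMeasure_eq_tsum r f
  have htotal : F + q + G = ∑' n, Po(r).real {n} := by
    rw [← sum_range_succ, hπ.sum_add_tsum_nat_add]
  have hone : F + q + G = 1 := htotal.trans <| by
    simpa [poissonMeasure_real_singleton] using (hasSum_one_poissonMeasure r).tsum_eq
  have hF : q * F ≤ p * (F + q) := by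
    have h := poissonMeasure_real_succ_mul_sum_le r k
    rwa [sum_range_succ _ (k + 1)] at h
  have hG : p * G ≤ q * (q + G) := by
    have h : F + ∑' i, Po(r).real {i + (k + 1)} = ∑' n, Po(r).real {n} :=
      hπ.sum_add_tsum_nat_add (k + 1)
    have h' := poissonMeasure_real_mul_tsum_le r k
    rwa [show ∑' i, Po(r).real {i + (k + 1)} = q + G by linarith] at h'
  have hg₁ : steinSolution r f (k + 1) = (S - μ * F) / (r * p) := by
    rw [steinSolution_succ]; simp only [mul_sub, sum_sub_distrib, ← sum_mul]; ring
  have hg₂ : steinSolution r f (k + 2) = (S + t - μ * (F + q)) / (r * q) := by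
    rw [steinSolution_succ, sum_range_succ]; simp only [mul_sub, sum_sub_distrib, ← sum_mul]; ring
  rw [hg₁, hg₂, hμ, div_sub_div _ _ (by positivity) (by positivity), div_le_iff₀ (by positivity)]
  calc (S + t - (S + t + R) * (F + q)) * (r * p) - r * q * (S - (S + t + R) * F)
      = r * (p * (S + t - (S + t + R) * (F + q)) - q * (S - (S + t + R) * F)) := by ring
    _ ≤ r * (p * q) := by
        gcongr
        exact sub_mul_sub_le_of_mul_le hp.le hq.le (sum_nonneg fun _ _ ↦ measureReal_nonneg)
          (tsum_nonneg fun _ ↦ measureReal_nonneg) hone hF hG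
          (sum_nonneg fun i _ ↦ mul_nonneg measureReal_nonneg (hf i).1)
          (mul_le_of_le_one_right hq.le (hf _).2)
          (tsum_nonneg fun i ↦ mul_nonneg measureReal_nonneg (hf _).1)
    _ = (r : ℝ)⁻¹ * (r * q * (r * p)) := by field_simp [(NNReal.coe_pos.2 hr).ne']

end Stein

section Bernoulli

variable {Ω : Type*} [MeasurableSpace Ω] {P : Measure Ω}

lemma ProbabilityTheory.iIndepFun.indepFun_sum_erase {ι : Type*} [DecidableEq ι] {s : Finset ι}
    {ξ : ι → Ω → ℕ} (hindep : iIndepFun ξ P) (hmeas : ∀ j, Measurable (ξ j)) (j : ι) :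
    IndepFun (ξ j) (fun ω ↦ ∑ i ∈ s.erase j, ξ i ω) P := by
  simpa only [← Finset.sum_apply] using
    (hindep.indepFun_finsetSum_of_notMem hmeas (notMem_erase j s)).symm

lemma integrable_comp_of_le [IsFiniteMeasure P] {K : Ω → ℕ} (hK : Measurable K) {n : ℕ}
    (hKn : ∀ ω, K ω ≤ n) (φ : ℕ → ℝ) : Integrable (fun ω ↦ φ (K ω)) P :=
  .of_bound (Measurable.of_discrete.comp hK).aestronglyMeasurable (∑ i ∈ range (n + 1), ‖φ i‖)
    (ae_of_all _ fun ω ↦ single_le_sum (f := fun i ↦ ‖φ i‖) (fun _ _ ↦ norm_nonneg _)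
      (mem_range.2 (Nat.lt_succ_of_le (hKn ω))))

lemma integral_natCast_of_le_one {X : Ω → ℕ} (hX : Measurable X) (hX₁ : ∀ ω, X ω ≤ 1) :
    ∫ ω, (X ω : ℝ) ∂P = P.real {ω | X ω = 1} := by
  have hA : MeasurableSet {ω | X ω = 1} := hX (measurableSet_singleton 1)
  rw [← integral_indicator_one hA]
  congr with ω
  rcases Nat.le_one_iff_eq_zero_or_eq_one.1 (hX₁ ω) with h | h <;> simp [h]

lemma ProbabilityTheory.IndepFun.integral_natCast_mul_comp {X Y : Ω → ℕ} (hXY : IndepFun X Y P)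
    (hX : Measurable X) (hX₁ : ∀ ω, X ω ≤ 1) (hY : Measurable Y) (h : ℕ → ℝ) :
    ∫ ω, X ω * h (Y ω) ∂P = P.real {ω | X ω = 1} * ∫ ω, h (Y ω) ∂P := by
  have := (hXY.comp (φ := Nat.cast) (ψ := h) .of_discrete .of_discrete)
    |>.integral_fun_mul_eq_mul_integral (Measurable.of_discrete.comp hX).aestronglyMeasurable
      (Measurable.of_discrete.comp hY).aestronglyMeasurable
  simp only [Function.comp_def] at this
  rw [this, integral_natCast_of_le_one hX hX₁]

lemma ProbabilityTheory.IndepFun.integral_natCast_mul_comp_add {X Y : Ω → ℕ}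
    (hXY : IndepFun X Y P) (hX : Measurable X) (hX₁ : ∀ ω, X ω ≤ 1) (hY : Measurable Y)
    (h : ℕ → ℝ) :
    ∫ ω, X ω * h (X ω + Y ω) ∂P = P.real {ω | X ω = 1} * ∫ ω, h (Y ω + 1) ∂P := by
  rw [← hXY.integral_natCast_mul_comp hX hX₁ hY (fun m ↦ h (m + 1))]
  congr with ω
  rcases Nat.le_one_iff_eq_zero_or_eq_one.1 (hX₁ ω) with h₀ | h₁
  · simp [h₀]
  · simp [h₁, add_comm]

lemma ProbabilityTheory.IndepFun.integral_comp_add_succ [IsFiniteMeasure P] {X Y : Ω → ℕ}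
    (hXY : IndepFun X Y P) (hX : Measurable X) (hX₁ : ∀ ω, X ω ≤ 1) (hY : Measurable Y)
    {n : ℕ} (hYn : ∀ ω, Y ω ≤ n) (g : ℕ → ℝ) :
    ∫ ω, g (X ω + Y ω + 1) ∂P =
      ∫ ω, g (Y ω + 1) ∂P + P.real {ω | X ω = 1} * ∫ ω, (g (Y ω + 2) - g (Y ω + 1)) ∂P := by
  have hdiff : ∫ ω, g (X ω + Y ω + 1) ∂P - ∫ ω, g (Y ω + 1) ∂P =
      ∫ ω, X ω * (g (Y ω + 2) - g (Y ω + 1)) ∂P := by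
    rw [← integral_sub (integrable_comp_of_le (K := fun ω ↦ X ω + Y ω) (hX.add hY)
      (fun ω ↦ add_le_add (hX₁ ω) (hYn ω)) (fun m ↦ g (m + 1)))
      (integrable_comp_of_le hY hYn (fun m ↦ g (m + 1)))]
    congr with ω
    rcases Nat.le_one_iff_eq_zero_or_eq_one.1 (hX₁ ω) with h₀ | h₁
    · simp [h₀]
    · simp only [h₁, Nat.cast_one, one_mul]; ring_nf
  rw [← hXY.integral_natCast_mul_comp hX hX₁ hY (fun m ↦ g (m + 2) - g (m + 1)), ← hdiff]
  ring

lemma integral_steinOperator_sum_eq [IsProbabilityMeasure P] {ι : Type*} [DecidableEq ι]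
    (s : Finset ι) {ξ : ι → Ω → ℕ} (hmeas : ∀ j, Measurable (ξ j)) (hval : ∀ j ω, ξ j ω ≤ 1)
    (hindep : iIndepFun ξ P) (g : ℕ → ℝ) :
    ∫ ω, ((∑ j ∈ s, P.real {ω | ξ j ω = 1}) * g (∑ j ∈ s, ξ j ω + 1) -
        (∑ j ∈ s, ξ j ω : ℕ) * g (∑ j ∈ s, ξ j ω)) ∂P =
      ∑ j ∈ s, P.real {ω | ξ j ω = 1} ^ 2 *
        ∫ ω, (g (∑ i ∈ s.erase j, ξ i ω + 2) - g (∑ i ∈ s.erase j, ξ i ω + 1)) ∂P := by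
  have hle (t : Finset ι) (ω : Ω) : ∑ i ∈ t, ξ i ω ≤ #t :=
    (sum_le_card_nsmul t _ 1 fun i _ ↦ hval i ω).trans (by simp)
  have hmeas' (t : Finset ι) : Measurable fun ω ↦ ∑ i ∈ t, ξ i ω :=
    Finset.measurable_sum t fun i _ ↦ hmeas i
  have hξg (j : ι) : Integrable (fun ω ↦ ξ j ω * g (∑ i ∈ s, ξ i ω)) P :=
    (integrable_comp_of_le (hmeas' s) (hle s) g).bdd_mul (c := 1)
      (Measurable.of_discrete.comp (hmeas j)).aestronglyMeasurable
      (ae_of_all _ fun ω ↦ by simpa using hval j ω)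
  have hsplit (ω : Ω) : ((∑ j ∈ s, ξ j ω : ℕ) : ℝ) * g (∑ j ∈ s, ξ j ω) =
      ∑ j ∈ s, ξ j ω * g (∑ i ∈ s, ξ i ω) := by
    push_cast; rw [sum_mul]
  rw [integral_sub ((integrable_comp_of_le (hmeas' s) (hle s) (fun m ↦ g (m + 1))).const_mul _)
      (integrable_comp_of_le (hmeas' s) (hle s) (fun m ↦ m * g m)),
    integral_const_mul, integral_congr_ae (ae_of_all _ hsplit),
    integral_finsetSum _ fun j _ ↦ hξg j, sum_mul, ← sum_sub_distrib]
  refine sum_congr rfl fun j hj ↦ ?_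
  have hind := hindep.indepFun_sum_erase hmeas j (s := s)
  simp only [← add_sum_erase s _ hj]
  rw [hind.integral_natCast_mul_comp_add (hmeas j) (hval j) (hmeas' _),
    hind.integral_comp_add_succ (hmeas j) (hval j) (hmeas' _) (hle _)]
  ring

lemma integral_comp_sum_sub_integral_poissonMeasure_le [IsProbabilityMeasure P] {ι : Type*}
    (s : Finset ι) {ξ : ι → Ω → ℕ} (hmeas : ∀ j, Measurable (ξ j)) (hval : ∀ j ω, ξ j ω ≤ 1)
    (hindep : iIndepFun ξ P) {r : ℝ≥0} (hr : 0 < r)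
    (hrs : (r : ℝ) = ∑ j ∈ s, P.real {ω | ξ j ω = 1}) {f : ℕ → ℝ} (hf : ∀ k, f k ∈ Set.Icc 0 1) :
    ∫ ω, f (∑ j ∈ s, ξ j ω) ∂P - ∫ n, f n ∂Po(r) ≤
      (∑ j ∈ s, P.real {ω | ξ j ω = 1} ^ 2) / r := by
  classical
  set g := steinSolution r f
  have hle (t : Finset ι) (ht : t ⊆ s) (ω : Ω) : ∑ i ∈ t, ξ i ω ≤ #s :=
    (sum_le_sum_of_subset ht).trans <| (sum_le_card_nsmul s _ 1 fun i _ ↦ hval i ω).trans (by simp)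
  have hmeas' (t : Finset ι) : Measurable fun ω ↦ ∑ i ∈ t, ξ i ω :=
    Finset.measurable_sum t fun i _ ↦ hmeas i
  have hincr (j : ι) :
      ∫ ω, (g (∑ i ∈ s.erase j, ξ i ω + 2) - g (∑ i ∈ s.erase j, ξ i ω + 1)) ∂P ≤ (r : ℝ)⁻¹ := by
    refine (integral_mono (integrable_comp_of_le (hmeas' _) (hle _ (erase_subset j s))
      (fun m ↦ g (m + 2) - g (m + 1))) (integrable_const _)
      fun ω ↦ steinSolution_succ_succ_sub_le hr hf _).trans ?_
    simp
  calc ∫ ω, f (∑ j ∈ s, ξ j ω) ∂P - ∫ n, f n ∂Po(r)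
      = ∫ ω, (r * g (∑ j ∈ s, ξ j ω + 1) - (∑ j ∈ s, ξ j ω : ℕ) * g (∑ j ∈ s, ξ j ω)) ∂P := by
        simp_rw [g, steinSolution_equation hr]
        rw [integral_sub (integrable_comp_of_le (hmeas' s) (hle s subset_rfl) f)
          (integrable_const _), integral_const]
        simp
    _ = ∑ j ∈ s, P.real {ω | ξ j ω = 1} ^ 2 *
          ∫ ω, (g (∑ i ∈ s.erase j, ξ i ω + 2) - g (∑ i ∈ s.erase j, ξ i ω + 1)) ∂P := by
        rw [hrs]; exact integral_steinOperator_sum_eq s hmeas hval hindep g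
    _ ≤ ∑ j ∈ s, P.real {ω | ξ j ω = 1} ^ 2 * (r : ℝ)⁻¹ := by gcongr with j; exact hincr j
    _ = (∑ j ∈ s, P.real {ω | ξ j ω = 1} ^ 2) / r := by rw [← sum_mul, div_eq_mul_inv]

theorem half_tsum_abs_sub_poissonMeasure_le [IsProbabilityMeasure P] {ι : Type*} (s : Finset ι)
    {ξ : ι → Ω → ℕ} (hmeas : ∀ j, Measurable (ξ j)) (hval : ∀ j ω, ξ j ω ≤ 1)
    (hindep : iIndepFun ξ P) {r : ℝ≥0} (hr : 0 < r)
    (hrs : (r : ℝ) = ∑ j ∈ s, P.real {ω | ξ j ω = 1}) :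
    (1 / 2) * ∑' k, |P.real {ω | ∑ j ∈ s, ξ j ω = k} - Po(r).real {k}| ≤
      (∑ j ∈ s, P.real {ω | ξ j ω = 1} ^ 2) / r := by
  set K : Ω → ℕ := fun ω ↦ ∑ j ∈ s, ξ j ω
  have hK : Measurable K := Finset.measurable_sum s fun j _ ↦ hmeas j
  have : IsProbabilityMeasure (P.map K) := Measure.isProbabilityMeasure_map hK.aemeasurable
  have hlaw (k : ℕ) : P.real {ω | ∑ j ∈ s, ξ j ω = k} = (P.map K).real {k} :=
    (map_measureReal_apply hK (measurableSet_singleton k)).symm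
  simp_rw [hlaw, half_tsum_abs_sub_measureReal_singleton]
  set A := {k | Po(r).real {k} ≤ (P.map K).real {k}}
  have hA : MeasurableSet A := .of_discrete
  rw [← integral_indicator_one hA, ← integral_indicator_one hA,
    integral_map hK.aemeasurable Measurable.of_discrete.aestronglyMeasurable]
  refine integral_comp_sum_sub_integral_poissonMeasure_le s hmeas hval hindep hr hrs fun k ↦ ?_
  by_cases hk : k ∈ A <;> simp [hk]

end Bernoulli

lemma Real.log_le_sub_inv_div_two_s6 {x : ℝ} (hx : 1 ≤ x) : Real.log x ≤ (x - x⁻¹) / 2 := by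
  have h := Real.self_le_sinh_iff.2 (Real.log_nonneg hx)
  rwa [Real.sinh_eq, Real.exp_neg, Real.exp_log (by linarith)] at h

lemma Real.log_add_one_sub_log_le_s6 {a : ℝ} (ha : 0 < a) :
    Real.log (a + 1) - Real.log a ≤ (a⁻¹ + (a + 1)⁻¹) / 2 := by
  have h := Real.log_le_sub_inv_div_two_s6 (x := (a + 1) / a) (by rw [le_div_iff₀ ha]; linarith)
  rw [Real.log_div (by positivity) ha.ne'] at h
  convert h using 1
  field_simp
  ring

lemma le_sum_Icc_div_add_sub_one {θ : ℝ} (hθ : 0 < θ) (n : ℕ) :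
    (θ * (n + θ) * Real.log (1 + n / θ) + n / 2) / (n + θ) ≤
      ∑ j ∈ Icc 1 n, θ / (θ + j - 1) := by
  have key : ∀ m : ℕ, θ * (Real.log (θ + m) - Real.log θ) + θ / 2 * (θ⁻¹ - (θ + m)⁻¹) ≤
      ∑ j ∈ Icc 1 m, θ / (θ + j - 1) := by
    intro m
    induction m with
    | zero => simp
    | succ m ih =>
      rw [sum_Icc_succ_top (by omega)]
      have h := mul_le_mul_of_nonneg_left
        (Real.log_add_one_sub_log_le_s6 (by positivity : 0 < θ + m)) hθ.le
      push_cast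
      rw [show θ + (m + 1 : ℝ) - 1 = θ + m by ring, ← add_assoc]
      linarith [show θ / (θ + m) = θ * (θ + m)⁻¹ from div_eq_mul_inv _ _]
  convert key n using 1
  rw [← Real.log_div (by positivity) hθ.ne']
  field_simp
  ring_nf

lemma sum_Icc_sq_div_add_sub_one_le {θ : ℝ} (hθ : 0 < θ) {n : ℕ} (hn : 1 ≤ n) :
    ∑ j ∈ Icc 1 n, (θ / (θ + j - 1)) ^ 2 ≤ (n * θ + n + θ) / (n + θ) := by
  have key : ∀ m : ℕ, ∑ j ∈ Icc 1 (m + 1), (θ / (θ + j - 1)) ^ 2 ≤ 1 + θ - θ ^ 2 / (θ + m) := by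
    intro m
    induction m with
    | zero => simp [sq, hθ.ne']
    | succ m ih =>
      rw [sum_Icc_succ_top (by omega)]
      have hm : 0 < θ + m := by positivity
      have hstep : (θ / (θ + m + 1)) ^ 2 ≤ θ ^ 2 / (θ + m) - θ ^ 2 / (θ + m + 1) := by
        rw [div_pow, div_sub_div _ _ hm.ne' (by positivity), div_le_div_iff₀ (by positivity)
          (by positivity)]
        nlinarith [sq_nonneg θ, mul_pos hm (by positivity : (0:ℝ) < θ + m + 1)]
      push_cast at ih ⊢
      rw [show θ + (m + 1 + 1 : ℝ) - 1 = θ + m + 1 by ring, ← add_assoc]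
      linarith
  obtain ⟨m, rfl⟩ := Nat.exists_eq_add_of_le' hn
  refine (key m).trans (le_of_sub_nonneg ?_)
  have hm : 0 < θ + m := by positivity
  rw [show ((m + 1 : ℕ) * θ + (m + 1 : ℕ) + θ) / ((m + 1 : ℕ) + θ) - (1 + θ - θ ^ 2 / (θ + m)) =
    θ ^ 2 / ((θ + m) * (θ + m + 1)) by push_cast; field_simp; ring]
  positivity

theorem stmt_6 (n : ℕ) (hn : 1 ≤ n) (θ : ℝ) (hθ : 0 < θ)
    {Ω : Type*} [MeasurableSpace Ω] (P : Measure Ω) [IsProbabilityMeasure P]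
    (ξ : ℕ → Ω → ℕ)
    (hmeas : ∀ j, Measurable (ξ j))
    (hval : ∀ j ω, ξ j ω ≤ 1)
    (hindep : iIndepFun ξ P)
    (hp : ∀ j ∈ Finset.Icc 1 n, (P {ω | ξ j ω = 1}).toReal = θ / (θ + (j : ℝ) - 1)) :
    (1 / 2) * ∑' k : ℕ,
        |(P {ω | ∑ j ∈ Finset.Icc 1 n, ξ j ω = k}).toReal -
          Real.exp (-(∑ j ∈ Finset.Icc 1 n, θ / (θ + (j : ℝ) - 1))) *
            (∑ j ∈ Finset.Icc 1 n, θ / (θ + (j : ℝ) - 1)) ^ k / (Nat.factorial k)| ≤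
      ((n : ℝ) * θ + n + θ) / (θ * (n + θ) * Real.log (1 + n / θ) + n / 2) := by
  have hpos : ∀ j ∈ Icc 1 n, 0 < θ / (θ + (j : ℝ) - 1) := fun j hj ↦ by
    have : (1 : ℝ) ≤ j := by exact_mod_cast (mem_Icc.1 hj).1
    exact div_pos hθ (by linarith)
  set r : ℝ≥0 := ⟨∑ j ∈ Icc 1 n, θ / (θ + (j : ℝ) - 1), sum_nonneg fun j hj ↦ (hpos j hj).le⟩
  have hr : 0 < r := sum_pos hpos ⟨1, mem_Icc.2 ⟨le_rfl, hn⟩⟩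
  have hrs : (r : ℝ) = ∑ j ∈ Icc 1 n, P.real {ω | ξ j ω = 1} :=
    sum_congr rfl fun j hj ↦ (hp j hj).symm
  have hsq : ∑ j ∈ Icc 1 n, P.real {ω | ξ j ω = 1} ^ 2 = ∑ j ∈ Icc 1 n, (θ / (θ + j - 1)) ^ 2 :=
    sum_congr rfl fun j hj ↦ by rw [← hp j hj]; rfl
  have hnθ : (0 : ℝ) < n + θ := by positivity
  have hlog : 0 ≤ Real.log (1 + n / θ) := Real.log_nonneg (le_add_of_nonneg_right (by positivity))
  calc _ = (1 / 2) * ∑' k, |P.real {ω | ∑ j ∈ Icc 1 n, ξ j ω = k} - Po(r).real {k}| := by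
        simp_rw [poissonMeasure_real_singleton]; rfl
    _ ≤ (∑ j ∈ Icc 1 n, P.real {ω | ξ j ω = 1} ^ 2) / r :=
        half_tsum_abs_sub_poissonMeasure_le _ hmeas hval hindep hr hrs
    _ ≤ ((n * θ + n + θ) / (n + θ)) /
          ((θ * (n + θ) * Real.log (1 + n / θ) + n / 2) / (n + θ)) := by
        rw [hsq]
        exact div_le_div₀ (by positivity) (sum_Icc_sq_div_add_sub_one_le hθ hn)
          (div_pos (add_pos_of_nonneg_of_pos (mul_nonneg (by positivity) hlog) (by positivity)) hnθ)
          (le_sum_Icc_div_add_sub_one hθ n)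
    _ = _ := div_div_div_cancel_right₀ hnθ.ne' _ _
end

section
/- Let b ≥ 1 be an integer, let θ > 1 be a real number, and define f : ℝ → ℝ by f(x) = exp(−θ·∑_{j=1}^b x^j/j). Then for every integer k with 1 ≤ k ≤ ⌈θ⌉ − 1 and all integers a, n with 1 ≤ a < n, one has (1/k!)·|f^{(k)}(1)|/f(1) · ( ∏_{i=0}^{n−a−1}(θ−k+i) ) / ( ∏_{i=0}^{n−a−1}(θ+i) ) ≤ (bθ²/(n−a))^k, where f^{(k)} denotes the k-th derivative of f. -/
/-!
Write `f = exp ∘ g`. Each derivative of `g` at `1` is a sum of `b` terms of size at most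
`θ b^(i-1)`, so `|g⁽ⁱ⁾(1)| ≤ θ bⁱ ≤ (bθ)ⁱ` for `i ≥ 1`. Applying Leibniz' rule to `f' = g' f`
and using `C(m,i) (m-i)! ≤ m!`, induction gives `|f⁽ᵏ⁾(1)| ≤ k! (bθ)ᵏ f(1)`.
For the Pochhammer quotient with `N = n - a`, splitting `(θ-k)_(N+k)` in two ways gives
`(θ-k)_N (θ-k+N)_k = (θ-k)_k (θ)_N`, so the quotient is `(θ-k)_k / (θ-k+N)_k ≤ θᵏ / Nᵏ`
because `0 ≤ θ - k`.
-/

open Finset Nat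
open scoped ContDiff

theorem Nat.choose_mul_factorial_sub_le (m i : ℕ) : m.choose i * (m - i)! ≤ m ! := by
  rcases le_or_gt i m with h | h
  · calc m.choose i * (m - i)! ≤ m.choose i * i ! * (m - i)! := by
          gcongr; exact Nat.le_mul_of_pos_right _ i.factorial_pos
      _ = m ! := Nat.choose_mul_factorial_mul_factorial h
  · simp [Nat.choose_eq_zero_of_lt h]

theorem abs_iteratedDeriv_exp_comp_le {g : ℝ → ℝ} (hg : ContDiff ℝ ∞ g) {x C : ℝ}
    (hC : ∀ i, |iteratedDeriv (i + 1) g x| ≤ C ^ (i + 1)) (k : ℕ) :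
    |iteratedDeriv k (fun y => Real.exp (g y)) x| ≤ k ! * C ^ k * Real.exp (g x) := by
  induction k using Nat.strong_induction_on with
  | _ k ih =>
    rcases k with _ | m
    · simp [abs_of_pos (Real.exp_pos _)]
    have hderiv : deriv (fun y => Real.exp (g y)) = deriv g * fun y => Real.exp (g y) := by
      funext y
      simp [(hg.differentiable (by simp)).differentiableAt.hasDerivAt.exp.deriv, mul_comm]
    have hterm : ∀ i ∈ range (m + 1),
        |(m.choose i : ℝ) * iteratedDeriv i (deriv g) x *
            iteratedDeriv (m - i) (fun y => Real.exp (g y)) x| ≤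
          m ! * C ^ (m + 1) * Real.exp (g x) := by
      intro i hi
      have hi : i ≤ m := Nat.lt_succ_iff.mp (mem_range.mp hi)
      rw [← iteratedDeriv_succ', abs_mul, abs_mul, Nat.abs_cast]
      calc (m.choose i : ℝ) * |iteratedDeriv (i + 1) g x| *
            |iteratedDeriv (m - i) (fun y => Real.exp (g y)) x|
          ≤ m.choose i * C ^ (i + 1) * ((m - i)! * C ^ (m - i) * Real.exp (g x)) := by
            have hCi := hC i
            have hCi_nonneg := (abs_nonneg _).trans hCi
            gcongr
            exact ih _ (by omega)
        _ = (m.choose i * (m - i)! : ℕ) * (C ^ (i + 1) * C ^ (m - i)) * Real.exp (g x) := by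
            push_cast; ring
        _ ≤ m ! * C ^ (m + 1) * Real.exp (g x) := by
            rw [← pow_add, show i + 1 + (m - i) = m + 1 by omega]
            have hCm_nonneg := (abs_nonneg _).trans (hC m)
            gcongr
            exact_mod_cast Nat.choose_mul_factorial_sub_le m i
    have hg' : ContDiff ℝ ∞ (deriv g) := (contDiff_infty_iff_deriv.mp hg).2
    calc |iteratedDeriv (m + 1) (fun y => Real.exp (g y)) x|
        = |∑ i ∈ range (m + 1), (m.choose i : ℝ) * iteratedDeriv i (deriv g) x *
            iteratedDeriv (m - i) (fun y => Real.exp (g y)) x| := by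
          rw [iteratedDeriv_succ', hderiv, iteratedDeriv_mul
            (hg'.of_le (by exact_mod_cast le_top)).contDiffAt
            ((hg.exp).of_le (by exact_mod_cast le_top)).contDiffAt]
      _ ≤ ∑ _i ∈ range (m + 1), m ! * C ^ (m + 1) * Real.exp (g x) :=
          (abs_sum_le_sum_abs _ _).trans (sum_le_sum hterm)
      _ = (m + 1)! * C ^ (m + 1) * Real.exp (g x) := by
          rw [sum_const, card_range, nsmul_eq_mul, factorial_succ]; push_cast; ring

theorem abs_iteratedDeriv_succ_neg_mul_sum_pow_div_le (θ : ℝ) (hθ : 0 ≤ θ) (b i : ℕ) :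
    |iteratedDeriv (i + 1) (fun x : ℝ => -θ * ∑ j ∈ Icc 1 b, x ^ j / (j : ℝ)) 1| ≤
      θ * b ^ (i + 1) := by
  have hsmooth : ∀ j ∈ Icc 1 b,
      ContDiffAt ℝ ((i + 1 : ℕ) : WithTop ℕ∞) (fun x : ℝ => x ^ j / (j : ℝ)) 1 :=
    fun j _ => by fun_prop
  have hterm : ∀ j ∈ Icc 1 b, ((j.descFactorial (i + 1) : ℕ) : ℝ) / j ≤ b ^ i := by
    intro j hj
    obtain ⟨j, rfl⟩ : ∃ j', j = j' + 1 := ⟨j - 1, by grind⟩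
    rw [Nat.succ_descFactorial_succ, Nat.cast_mul, mul_div_cancel_left₀ _ (by positivity)]
    calc ((j.descFactorial i : ℕ) : ℝ) ≤ ((j ^ i : ℕ) : ℝ) := by
          exact_mod_cast j.descFactorial_le_pow i
      _ ≤ b ^ i := by push_cast; gcongr; grind
  calc |iteratedDeriv (i + 1) (fun x : ℝ => -θ * ∑ j ∈ Icc 1 b, x ^ j / (j : ℝ)) 1|
      = θ * |∑ j ∈ Icc 1 b, ((j.descFactorial (i + 1) : ℕ) : ℝ) / j| := by
        rw [iteratedDeriv_const_mul_field, iteratedDeriv_fun_sum hsmooth, abs_mul, abs_neg,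
          abs_of_nonneg hθ]
        simp only [iteratedDeriv_div_const, iteratedDeriv_pow, one_pow, mul_one]
    _ ≤ θ * (#(Icc 1 b) • (b : ℝ) ^ i) := by
        gcongr
        refine (abs_sum_le_sum_abs _ _).trans (sum_le_card_nsmul _ _ _ fun j hj => ?_)
        rw [abs_of_nonneg (by positivity)]
        exact hterm j hj
    _ = θ * b ^ (i + 1) := by rw [Nat.card_Icc, nsmul_eq_mul, Nat.add_sub_cancel]; ring

theorem prod_range_sub_add_mul_prod_range {R : Type*} [CommRing R] (x : R) (k N : ℕ) :
    (∏ i ∈ range N, (x - k + i)) * ∏ i ∈ range k, (x - k + N + i) =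
      (∏ i ∈ range k, (x - k + i)) * ∏ i ∈ range N, (x + i) := by
  have h := prod_range_add (fun i => x - k + i) N k
  rw [add_comm, prod_range_add] at h
  simp only [Nat.cast_add, ← add_assoc, sub_add_cancel] at h
  exact h.symm

theorem prod_range_sub_add_div_prod_range_le {θ : ℝ} {k N : ℕ} (hk : (k : ℝ) ≤ θ) (hN : 0 < N) :
    (∏ i ∈ range N, (θ - k + i)) / ∏ i ∈ range N, (θ + i) ≤ (θ / N) ^ k := by
  have hθ : 0 ≤ θ := (Nat.cast_nonneg k).trans hk
  have hN' : (0 : ℝ) < N := Nat.cast_pos.mpr hN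
  have hden : 0 ≤ ∏ i ∈ range N, (θ + i) := prod_nonneg fun i _ => by positivity
  have hlow : (N : ℝ) ^ k ≤ ∏ i ∈ range k, (θ - k + N + i) := by
    refine (pow_eq_prod_const (N : ℝ) k).le.trans (prod_le_prod (fun _ _ => hN'.le) fun i _ => ?_)
    have : (0 : ℝ) ≤ i := i.cast_nonneg
    linarith
  have hup : ∏ i ∈ range k, (θ - k + i) ≤ θ ^ k := by
    refine (prod_le_prod (fun i _ => ?_) fun i hi => ?_).trans (pow_eq_prod_const θ k).ge
    · have : (0 : ℝ) ≤ i := i.cast_nonneg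
      linarith
    · have : (i : ℝ) ≤ k := by exact_mod_cast (mem_range.mp hi).le
      linarith
  refine div_le_of_le_mul₀ hden (by positivity) ?_
  calc ∏ i ∈ range N, (θ - k + i)
      = (∏ i ∈ range N, (θ - k + i)) * N ^ k / N ^ k := by field_simp
    _ ≤ (∏ i ∈ range N, (θ - k + i)) * (∏ i ∈ range k, (θ - k + N + i)) / N ^ k := by gcongr
    _ = (∏ i ∈ range k, (θ - k + i)) * (∏ i ∈ range N, (θ + i)) / N ^ k := by
        rw [prod_range_sub_add_mul_prod_range]
    _ ≤ θ ^ k * (∏ i ∈ range N, (θ + i)) / N ^ k := by gcongr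
    _ = (θ / N) ^ k * ∏ i ∈ range N, (θ + i) := by rw [div_pow]; ring

theorem stmt_11_general (b : ℕ) (θ : ℝ) (hθ : 1 < θ)
    (f : ℝ → ℝ) (hf : f = fun x : ℝ => Real.exp (-θ * ∑ j ∈ Finset.Icc 1 b, x ^ j / (j : ℝ)))
    (k : ℕ) (hk2 : (k : ℤ) ≤ ⌈θ⌉ - 1)
    (a n : ℕ) (han : a < n) :
    (1 / (Nat.factorial k : ℝ)) * (|iteratedDeriv k f 1| / f 1) *
        ((∏ i ∈ Finset.range (n - a), (θ - k + i)) /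
          (∏ i ∈ Finset.range (n - a), (θ + i))) ≤
      ((b : ℝ) * θ ^ 2 / ((n : ℝ) - a)) ^ k := by
  subst hf
  have hθ0 : 0 < θ := zero_lt_one.trans hθ
  have hkθ : (k : ℝ) < θ := by exact_mod_cast Int.lt_ceil.mp (by omega)
  have hg : ∀ i, |iteratedDeriv (i + 1)
      (fun x : ℝ => -θ * ∑ j ∈ Icc 1 b, x ^ j / (j : ℝ)) 1| ≤ (b * θ) ^ (i + 1) := fun i =>
    (abs_iteratedDeriv_succ_neg_mul_sum_pow_div_le θ hθ0.le b i).trans <| by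
      rw [mul_pow, mul_comm]; gcongr; exact le_self_pow₀ hθ.le (by omega)
  have hderiv := abs_iteratedDeriv_exp_comp_le (by fun_prop) hg k
  have hratio := prod_range_sub_add_div_prod_range_le hkθ.le (Nat.sub_pos_of_lt han)
  rw [← Nat.cast_sub han.le]
  calc _ ≤ 1 / (k ! : ℝ) * (k ! * (b * θ) ^ k) * (θ / (n - a : ℕ)) ^ k := by
        gcongr
        exact (div_le_iff₀ (Real.exp_pos _)).mpr hderiv
    _ = (b * θ ^ 2 / (n - a : ℕ)) ^ k := by field_simp; ring

theorem stmt_11 (b : ℕ) (hb : 1 ≤ b) (θ : ℝ) (hθ : 1 < θ)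
    (f : ℝ → ℝ) (hf : f = fun x : ℝ => Real.exp (-θ * ∑ j ∈ Finset.Icc 1 b, x ^ j / (j : ℝ)))
    (k : ℕ) (hk1 : 1 ≤ k) (hk2 : (k : ℤ) ≤ ⌈θ⌉ - 1)
    (a n : ℕ) (ha : 1 ≤ a) (han : a < n) :
    (1 / (Nat.factorial k : ℝ)) * (|iteratedDeriv k f 1| / f 1) *
        ((∏ i ∈ Finset.range (n - a), (θ - k + i)) /
          (∏ i ∈ Finset.range (n - a), (θ + i))) ≤
      ((b : ℝ) * θ ^ 2 / ((n : ℝ) - a)) ^ k :=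
  stmt_11_general b θ hθ f hf k hk2 a n han
end

section
/- Let θ : ℕ → ℝ be positive and nondecreasing with n/θ_n → ∞ and θ_n²/n → 0 as n → ∞. Then Γ(θ_n)·(θ_n)_n/n! = n^{θ_n−1}·(1 + θ_n(θ_n−1)/(2n)) + O(n^{θ_n−1}·θ_n⁴/n²); that is, there exist a constant C and an index N such that for all n ≥ N, |Γ(θ_n)·(θ_n)_n/n! − n^{θ_n−1}·(1 + θ_n(θ_n−1)/(2n))| ≤ C·n^{θ_n−1}·θ_n⁴/n². -/
open Filter Finset Real

/-!
Write `P(t, m) = Γ(t) (t)_m / (m! m^(t-1))`. Euler's limit formula gives `P(t, m) → 1`, and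
`log P(t, m) - log P(t, m + 1) = t log(1 + 1/m) - log(1 + t/m)`, which a second-order Taylor
expansion shows to be `t(t-1)/2 · (1/m - 1/(m+1)) + O((t + t³)/m³)`. Summing the tail from `n`,
`log P(t, n) = t(t-1)/(2n) + O((t + t³)/n²)`, and exponentiating (the exponent is `O(t²/n)`, small
by hypothesis) yields `P(t, n) = 1 + t(t-1)/(2n) + O(t⁴/n²)` uniformly in `t ≥ θ₀`.
-/

noncomputable def gammaRatio (t : ℝ) (m : ℕ) : ℝ :=
  Gamma t * (∏ i ∈ range m, (t + i)) / m.factorial / (m : ℝ) ^ (t - 1)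

section gammaRatio

variable {t : ℝ}

lemma gammaRatio_pos (ht : 0 < t) {m : ℕ} (hm : 0 < m) : 0 < gammaRatio t m := by
  have : 0 < ∏ i ∈ range m, (t + i) := prod_pos fun i _ => by positivity
  unfold gammaRatio
  have := Gamma_pos_of_pos ht
  positivity

lemma gammaRatio_eq_div_GammaSeq (ht : 0 < t) {m : ℕ} (hm : 0 < m) :
    gammaRatio t m = Gamma t / GammaSeq t m * (m / (m + t)) := by
  have hm' : (0 : ℝ) < m := by exact_mod_cast hm
  have : 0 < ∏ i ∈ range m, (t + i) := prod_pos fun i _ => by positivity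
  rw [gammaRatio, GammaSeq, prod_range_succ, rpow_sub hm', rpow_one]
  field_simp
  ring

lemma tendsto_gammaRatio (ht : 0 < t) : Tendsto (gammaRatio t) atTop (nhds 1) := by
  have hΓ := (Gamma_pos_of_pos ht).ne'
  have h := ((tendsto_const_nhds (x := Gamma t)).div (GammaSeq_tendsto_Gamma t) hΓ).mul
    (tendsto_natCast_div_add_atTop t)
  rw [div_self hΓ, one_mul] at h
  refine h.congr' ?_
  filter_upwards [eventually_gt_atTop 0] with m hm
  exact (gammaRatio_eq_div_GammaSeq ht hm).symm

lemma rpow_mul_gammaRatio {m : ℕ} (hm : 0 < m) :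
    (m : ℝ) ^ (t - 1) * gammaRatio t m = Gamma t * (∏ i ∈ range m, (t + i)) / m.factorial := by
  have : (0 : ℝ) < (m : ℝ) ^ (t - 1) := by positivity
  rw [gammaRatio, mul_div_cancel₀ _ this.ne']

lemma log_gammaRatio (ht : 0 < t) {m : ℕ} (hm : 0 < m) :
    log (gammaRatio t m) = log (Gamma t) + ∑ i ∈ range m, log (t + i) - log m.factorial
      - (t - 1) * log m := by
  have hm' : (0 : ℝ) < m := by exact_mod_cast hm
  have : 0 < ∏ i ∈ range m, (t + i) := prod_pos fun i _ => by positivity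
  have := Gamma_pos_of_pos ht
  rw [gammaRatio, log_div (by positivity) (by positivity), log_div (by positivity) (by positivity),
    log_mul (by positivity) (by positivity), log_prod fun i _ => by positivity, log_rpow hm']

lemma log_gammaRatio_sub_log_gammaRatio_succ (ht : 0 < t) {m : ℕ} (hm : 0 < m) :
    log (gammaRatio t m) - log (gammaRatio t (m + 1)) = t * log (1 + 1 / m) - log (1 + t / m) := by
  have hm' : (0 : ℝ) < m := by exact_mod_cast hm
  have h1 : 1 + 1 / (m : ℝ) = (m + 1) / m := by field_simp
  have h2 : 1 + t / (m : ℝ) = (t + m) / m := by field_simp; ring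
  rw [log_gammaRatio ht hm, log_gammaRatio ht m.succ_pos, sum_range_succ, Nat.factorial_succ, h1,
    h2, log_div (by positivity) hm'.ne', log_div (by positivity) hm'.ne']
  push_cast
  rw [log_mul (by positivity) (by positivity)]
  ring

end gammaRatio

lemma abs_le_of_tendsto_zero_of_abs_sub_succ_le {a b : ℕ → ℝ} {n : ℕ}
    (ha : Tendsto a atTop (nhds 0)) (hb : ∀ m ≥ n, 0 ≤ b m)
    (hab : ∀ m ≥ n, |a m - a (m + 1)| ≤ b m - b (m + 1)) : |a n| ≤ b n := by
  have key : ∀ m ≥ n, |a n - a m| ≤ b n - b m := by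
    intro m hm
    induction m, hm using Nat.le_induction with
    | base => simp
    | succ m hnm ih =>
      calc |a n - a (m + 1)| ≤ |a n - a m| + |a m - a (m + 1)| := abs_sub_le _ _ _
        _ ≤ b n - b (m + 1) := by linarith [hab m hnm]
  have hlim : Tendsto (fun m => |a n - a m|) atTop (nhds |a n|) := by
    simpa using (tendsto_const_nhds.sub ha).abs
  refine le_of_tendsto hlim (eventually_atTop.2 ⟨n, fun m hm => ?_⟩)
  linarith [key m hm, hb m hm]

lemma abs_log_one_add_sub_le {x : ℝ} (h0 : 0 ≤ x) (h1 : x ≤ 1 / 2) :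
    |log (1 + x) - x + x ^ 2 / 2| ≤ 2 * x ^ 3 := by
  have hx : |-x| = x := by rw [abs_neg, abs_of_nonneg h0]
  have h := abs_log_sub_add_sum_range_le (x := -x) (by rw [hx]; linarith) 2
  have hsum : ∑ i ∈ range 2, (-x) ^ (i + 1) / (i + 1) = -x + x ^ 2 / 2 := by
    norm_num [sum_range_succ]
  rw [hsum, hx, sub_neg_eq_add] at h
  calc |log (1 + x) - x + x ^ 2 / 2| = |-x + x ^ 2 / 2 + log (1 + x)| := by ring_nf
    _ ≤ x ^ 3 / (1 - x) := h
    _ ≤ 2 * x ^ 3 := by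
      rw [div_le_iff₀ (by linarith)]
      nlinarith [pow_nonneg h0 3]

/-- For `u = 1/m` the main term `u² / (1 + u)` is `1/m - 1/(m+1)`, which telescopes. -/
lemma abs_mul_log_one_add_sub_log_one_add_mul_sub_le {t u : ℝ} (ht : 0 < t) (hu : 0 < u)
    (hu2 : u ≤ 1 / 2) (htu : t * u ≤ 1 / 2) :
    |t * log (1 + u) - log (1 + t * u) - t * (t - 1) / 2 * (u ^ 2 / (1 + u))| ≤
      (3 * t + t ^ 2 + 2 * t ^ 3) * u ^ 3 := by
  set A := log (1 + u) - u + u ^ 2 / 2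
  set B := log (1 + t * u) - t * u + (t * u) ^ 2 / 2
  have hA : |A| ≤ 2 * u ^ 3 := abs_log_one_add_sub_le hu.le hu2
  have hB : |B| ≤ 2 * (t * u) ^ 3 := abs_log_one_add_sub_le (by positivity) htu
  have hR : |(t ^ 2 - t) / 2 * (u ^ 3 / (1 + u))| ≤ (t ^ 2 + t) / 2 * u ^ 3 := by
    rw [abs_mul, abs_of_nonneg (by positivity : 0 ≤ u ^ 3 / (1 + u))]
    refine mul_le_mul (abs_le.2 ⟨by nlinarith, by nlinarith⟩) (div_le_self (by positivity)
      (by linarith)) (by positivity) (by positivity)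
  have hsplit : t * log (1 + u) - log (1 + t * u) - t * (t - 1) / 2 * (u ^ 2 / (1 + u)) =
      t * A - B + (t ^ 2 - t) / 2 * (u ^ 3 / (1 + u)) := by
    simp only [A, B]
    field_simp
    ring
  rw [hsplit]
  calc |t * A - B + (t ^ 2 - t) / 2 * (u ^ 3 / (1 + u))|
      ≤ |t * A| + |B| + |(t ^ 2 - t) / 2 * (u ^ 3 / (1 + u))| :=
        (abs_add_le _ _).trans (by gcongr; exact abs_sub _ _)
    _ = t * |A| + |B| + |(t ^ 2 - t) / 2 * (u ^ 3 / (1 + u))| := by rw [abs_mul, abs_of_pos ht]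
    _ ≤ (3 * t + t ^ 2 + 2 * t ^ 3) * u ^ 3 := by
        have := mul_le_mul_of_nonneg_left hA ht.le
        have : 0 ≤ t * u ^ 3 := by positivity
        have : 0 ≤ t ^ 2 * u ^ 3 := by positivity
        nlinarith

lemma abs_log_gammaRatio_sub_le {t : ℝ} (ht : 0 < t) {n : ℕ} (hn : 2 ≤ n) (htn : 2 * t ≤ n) :
    |log (gammaRatio t n) - t * (t - 1) / (2 * n)| ≤ (3 * t + t ^ 2 + 2 * t ^ 3) / n ^ 2 := by
  set c := 3 * t + t ^ 2 + 2 * t ^ 3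
  have hc : 0 ≤ c := by positivity
  set a : ℕ → ℝ := fun m => log (gammaRatio t m) - t * (t - 1) / (2 * m)
  -- `c/m³ ≤ c/((m-1)m(m+1))`, the decrement of `b`
  set b : ℕ → ℝ := fun m => c / (2 * ((m : ℝ) - 1) * m)
  have ha : Tendsto a atTop (nhds 0) := by
    have h := ((tendsto_gammaRatio ht).log one_ne_zero).sub <|
      (tendsto_const_nhds (x := t * (t - 1))).div_atTop
        (tendsto_natCast_atTop_atTop.const_mul_atTop two_pos)
    rwa [log_one, sub_zero] at h
  have hn' : (2 : ℝ) ≤ n := by exact_mod_cast hn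
  have hb : ∀ m ≥ n, 0 ≤ b m := fun m hm => by
    have : (n : ℝ) ≤ m := by exact_mod_cast hm
    exact div_nonneg hc (by nlinarith)
  have hab : ∀ m ≥ n, |a m - a (m + 1)| ≤ b m - b (m + 1) := by
    intro m hm
    have hnm : (n : ℝ) ≤ m := by exact_mod_cast hm
    have hm1 : (0 : ℝ) < m - 1 := by linarith
    have hm0 : (0 : ℝ) < m := by linarith
    have hu := abs_mul_log_one_add_sub_log_one_add_mul_sub_le ht (u := 1 / m) (by positivity)
      (by rw [div_le_div_iff₀ hm0 two_pos]; linarith)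
      (by rw [mul_one_div, div_le_div_iff₀ hm0 two_pos]; linarith)
    have hda : a m - a (m + 1) = t * log (1 + 1 / m) - log (1 + t * (1 / m)) -
        t * (t - 1) / 2 * ((1 / m) ^ 2 / (1 + 1 / m)) := by
      simp only [a]
      rw [sub_sub_sub_comm, log_gammaRatio_sub_log_gammaRatio_succ ht (by omega), mul_one_div]
      push_cast
      field_simp
      ring
    have hdb : b m - b (m + 1) = c / (((m : ℝ) - 1) * m * (m + 1)) := by
      simp only [b]
      push_cast
      rw [add_sub_cancel_right]
      field_simp
      ring
    rw [hda, hdb]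
    refine hu.trans ?_
    rw [one_div_pow, ← div_eq_mul_one_div]
    exact div_le_div_of_nonneg_left hc (by positivity) (by nlinarith [mul_pos hm1 hm0])
  refine (abs_le_of_tendsto_zero_of_abs_sub_succ_le ha hb hab).trans ?_
  exact div_le_div_of_nonneg_left hc (by positivity) (by nlinarith)

lemma abs_exp_sub_one_sub_le {x y s A B : ℝ} (hA : 0 ≤ A) (hs0 : 0 ≤ s) (hs1 : s ≤ 1)
    (hsmall : (A + B) * s ≤ 1) (hxy : |x - y| ≤ A * s ^ 2) (hy : |y| ≤ B * s) :
    |exp x - 1 - y| ≤ ((A + B) ^ 2 + A) * s ^ 2 := by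
  have hx : |x| ≤ (A + B) * s :=
    calc |x| = |y + (x - y)| := by ring_nf
      _ ≤ |y| + |x - y| := abs_add_le _ _
      _ ≤ (A + B) * s := by nlinarith [mul_le_mul_of_nonneg_left hs1 (mul_nonneg hA hs0)]
  have hx2 : x ^ 2 ≤ ((A + B) * s) ^ 2 := by
    rw [← sq_abs]; exact pow_le_pow_left₀ (abs_nonneg x) hx 2
  calc |exp x - 1 - y| = |(exp x - 1 - x) + (x - y)| := by ring_nf
    _ ≤ |exp x - 1 - x| + |x - y| := abs_add_le _ _
    _ ≤ x ^ 2 + A * s ^ 2 := add_le_add (abs_exp_sub_one_sub_id_le (hx.trans hsmall)) hxy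
    _ ≤ ((A + B) ^ 2 + A) * s ^ 2 := by nlinarith

lemma three_mul_add_sq_add_two_mul_cube_le {τ t : ℝ} (hτ : 0 < τ) (h : τ ≤ t) :
    3 * t + t ^ 2 + 2 * t ^ 3 ≤ (3 / τ ^ 3 + 1 / τ ^ 2 + 2 / τ) * t ^ 4 := by
  have ht : 0 < t := hτ.trans_le h
  have h1 : t ≤ t ^ 4 / τ ^ 3 := by
    rw [le_div_iff₀ (by positivity)]
    nlinarith [mul_le_mul_of_nonneg_left (pow_le_pow_left₀ hτ.le h 3) ht.le]
  have h2 : t ^ 2 ≤ t ^ 4 / τ ^ 2 := by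
    rw [le_div_iff₀ (by positivity)]
    nlinarith [mul_le_mul_of_nonneg_left (pow_le_pow_left₀ hτ.le h 2) (sq_nonneg t)]
  have h3 : t ^ 3 ≤ t ^ 4 / τ := by
    rw [le_div_iff₀ hτ]
    nlinarith [mul_le_mul_of_nonneg_left h (pow_nonneg ht.le 3)]
  calc 3 * t + t ^ 2 + 2 * t ^ 3 ≤ 3 * (t ^ 4 / τ ^ 3) + t ^ 4 / τ ^ 2 + 2 * (t ^ 4 / τ) := by
        linarith
    _ = (3 / τ ^ 3 + 1 / τ ^ 2 + 2 / τ) * t ^ 4 := by ring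

lemma abs_mul_sub_one_div_le {τ t : ℝ} (hτ : 0 < τ) (h : τ ≤ t) (n : ℕ) :
    |t * (t - 1) / (2 * n)| ≤ (1 + 1 / τ) / 2 * (t ^ 2 / n) := by
  have ht : 0 < t := hτ.trans_le h
  have habs : |t - 1| ≤ t + t / τ := by
    have : 1 ≤ t / τ := (one_le_div hτ).2 h
    rw [abs_le]; constructor <;> linarith
  have hrhs : (1 + 1 / τ) / 2 * (t ^ 2 / n) = t * (t + t / τ) / (2 * n) := by ring
  rw [hrhs, abs_div, abs_mul, abs_of_pos ht, abs_of_nonneg (by positivity : (0 : ℝ) ≤ 2 * n)]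
  exact div_le_div_of_nonneg_right (mul_le_mul_of_nonneg_left habs ht.le) (by positivity)

lemma exists_abs_gammaRatio_sub_le {τ : ℝ} (hτ : 0 < τ) :
    ∃ C δ : ℝ, 0 < δ ∧ ∀ t ≥ τ, ∀ n : ℕ, 4 ≤ n → t ^ 2 / n ≤ δ →
      |gammaRatio t n - (1 + t * (t - 1) / (2 * n))| ≤ C * (t ^ 2 / n) ^ 2 := by
  set A := 3 / τ ^ 3 + 1 / τ ^ 2 + 2 / τ
  set B := (1 + 1 / τ) / 2
  have hA : 0 ≤ A := by positivity
  have hB : 0 ≤ B := by positivity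
  refine ⟨(A + B) ^ 2 + A, 1 / (A + B + 1), by positivity, fun t hτt n hn hs => ?_⟩
  have ht : 0 < t := hτ.trans_le hτt
  have hn0 : (0 : ℝ) < n := by positivity
  have hn4 : (4 : ℝ) ≤ n := by exact_mod_cast hn
  have hsmall : (A + B + 1) * (t ^ 2 / n) ≤ 1 := by
    rwa [le_div_iff₀' (by positivity)] at hs
  have hs0 : 0 ≤ t ^ 2 / n := by positivity
  have hs1 : t ^ 2 / n ≤ 1 := by nlinarith [mul_nonneg (add_nonneg hA hB) hs0]
  have h2t : 2 * t ≤ n := by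
    have : t ^ 2 ≤ n := by rwa [div_le_one hn0] at hs1
    nlinarith
  have hxy : |log (gammaRatio t n) - t * (t - 1) / (2 * n)| ≤ A * (t ^ 2 / n) ^ 2 := by
    refine (abs_log_gammaRatio_sub_le ht (by omega) h2t).trans ?_
    rw [div_pow, ← pow_mul, mul_div_assoc']
    exact div_le_div_of_nonneg_right (three_mul_add_sq_add_two_mul_cube_le hτ hτt) (by positivity)
  have h := abs_exp_sub_one_sub_le (B := B) hA hs0 hs1 (by linarith) hxy
    (abs_mul_sub_one_div_le hτ hτt n)
  rwa [exp_log (gammaRatio_pos ht (by omega)), sub_sub] at h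

theorem stmt_12_general (θ : ℕ → ℝ) (hpos : ∀ n, 0 < θ n) (hmono : Monotone θ)
    (hsq : Tendsto (fun n : ℕ => θ n ^ 2 / n) atTop (nhds 0)) :
    ∃ C : ℝ, ∃ N : ℕ, ∀ n ≥ N,
      |Real.Gamma (θ n) * (∏ i ∈ Finset.range n, (θ n + i)) / (Nat.factorial n) -
          (n : ℝ) ^ (θ n - 1) * (1 + θ n * (θ n - 1) / (2 * n))| ≤
        C * ((n : ℝ) ^ (θ n - 1) * θ n ^ 4 / (n : ℝ) ^ 2) := by
  obtain ⟨C, δ, hδ, hC⟩ := exists_abs_gammaRatio_sub_le (hpos 0)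
  obtain ⟨N, hN⟩ := eventually_atTop.1
    ((eventually_ge_atTop 4).and (hsq.eventually (eventually_le_nhds hδ)))
  refine ⟨C, N, fun n hn => ?_⟩
  obtain ⟨hn4, hsn⟩ := hN n hn
  have hpow : 0 < (n : ℝ) ^ (θ n - 1) := by positivity
  rw [← rpow_mul_gammaRatio (by omega), ← mul_sub, abs_mul, abs_of_pos hpow]
  calc (n : ℝ) ^ (θ n - 1) * |gammaRatio (θ n) n - (1 + θ n * (θ n - 1) / (2 * n))|
      ≤ (n : ℝ) ^ (θ n - 1) * (C * (θ n ^ 2 / n) ^ 2) :=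
        mul_le_mul_of_nonneg_left (hC _ (hmono n.zero_le) n hn4 hsn) hpow.le
    _ = C * ((n : ℝ) ^ (θ n - 1) * θ n ^ 4 / (n : ℝ) ^ 2) := by ring

theorem stmt_12 (θ : ℕ → ℝ) (hpos : ∀ n, 0 < θ n) (hmono : Monotone θ)
    (hA : Tendsto (fun n : ℕ => (n : ℝ) / θ n) atTop atTop)
    (hsq : Tendsto (fun n : ℕ => θ n ^ 2 / n) atTop (nhds 0)) :
    ∃ C : ℝ, ∃ N : ℕ, ∀ n ≥ N,
      |Real.Gamma (θ n) * (∏ i ∈ Finset.range n, (θ n + i)) / (Nat.factorial n) -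
          (n : ℝ) ^ (θ n - 1) * (1 + θ n * (θ n - 1) / (2 * n))| ≤
        C * ((n : ℝ) ^ (θ n - 1) * θ n ^ 4 / (n : ℝ) ^ 2) :=
  stmt_12_general θ hpos hmono hsq
end

section
/- Let θ : ℕ → ℝ be positive and nondecreasing with n/θ_n → 0 as n → ∞ (Case C), and fix an integer j ≥ 1. Then (n!/(n−j)!) · (Γ(n+θ_n−j)/Γ(n+θ_n)) · (θ_n/n)^j → 1 as n → ∞. Equivalently, under the Ewens sampling formula the expected number of alleles represented exactly j times, E[C_j^n] = (θ_n/j)·(n!/(n−j)!)·Γ(n+θ_n−j)/Γ(n+θ_n), satisfies E[C_j^n] ∼ (θ_n/j)·(n/θ_n)^j. -/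
/-!
By the functional equation of Γ, for n ≥ j the expression is the finite product
∏_{i<j} (n - i)/n · θ_n/(n + θ_n - (i + 1)). Each factor tends to 1: the first trivially, the
second because n/θ_n → 0 also forces 1/θ_n = (n/θ_n)·(1/n) → 0.
-/

open Filter Topology Finset
open scoped Nat

lemma Real.Gamma_eq_Gamma_sub_nat_mul_prod {x : ℝ} {j : ℕ} (hx : (j : ℝ) < x) :
    Real.Gamma x = Real.Gamma (x - j) * ∏ i ∈ range j, (x - (i + 1)) := by
  induction j with
  | zero => simp
  | succ j ih =>
    push_cast at hx ⊢
    have hpos : 0 < x - (j + 1) := by linarith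
    have hstep : Real.Gamma (x - j) = (x - (j + 1)) * Real.Gamma (x - (j + 1)) := by
      rw [← Real.Gamma_add_one hpos.ne']
      ring_nf
    rw [ih (by linarith), hstep, prod_range_succ]
    ring

lemma Nat.cast_factorial_div_factorial_sub {n j : ℕ} (h : j ≤ n) :
    (n ! : ℝ) / (n - j)! = ∏ i ∈ range j, ((n : ℝ) - i) := by
  rw [← descPochhammer_eval_eq_prod_range, descPochhammer_eval_eq_descFactorial,
    div_eq_iff (by positivity), ← Nat.cast_mul, mul_comm, Nat.factorial_mul_descFactorial h]

lemma factorial_div_mul_Gamma_div_mul_pow_eq_prod {n j : ℕ} (hjn : j ≤ n) {t : ℝ} (ht : 0 < t) :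
    (n ! : ℝ) / (n - j)! * (Real.Gamma (n + t - j) / Real.Gamma (n + t)) * (t / n) ^ j =
      ∏ i ∈ range j, (((n : ℝ) - i) / n * (t / (n + t - (i + 1)))) := by
  have hj : (j : ℝ) < n + t := by
    have : (j : ℝ) ≤ n := by exact_mod_cast hjn
    linarith
  rw [Nat.cast_factorial_div_factorial_sub hjn, Real.Gamma_eq_Gamma_sub_nat_mul_prod hj,
    div_mul_cancel_left₀ (Real.Gamma_pos_of_pos (by linarith)).ne']
  simp only [div_mul_div_comm, prod_div_distrib, prod_mul_distrib, prod_const, card_range]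
  ring

lemma tendsto_natCast_sub_div (c : ℝ) :
    Tendsto (fun n : ℕ => ((n : ℝ) - c) / n) atTop (𝓝 1) := by
  have h := (tendsto_const_div_atTop_nhds_zero_nat c).const_sub (1 : ℝ)
  rw [sub_zero] at h
  refine h.congr' ?_
  filter_upwards [eventually_ne_atTop 0] with n hn
  rw [sub_div, div_self (by exact_mod_cast hn)]

lemma tendsto_div_add_sub_of_tendsto_natCast_div {t : ℕ → ℝ} (ht : ∀ n, t n ≠ 0)
    (h : Tendsto (fun n : ℕ => (n : ℝ) / t n) atTop (𝓝 0)) (c : ℝ) :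
    Tendsto (fun n : ℕ => t n / (n + t n - c)) atTop (𝓝 1) := by
  have hinv : Tendsto (fun n => (t n)⁻¹) atTop (𝓝 0) := by
    have := h.mul (tendsto_one_div_atTop_nhds_zero_nat (𝕜 := ℝ))
    rw [zero_mul] at this
    refine this.congr' ?_
    filter_upwards [eventually_ne_atTop 0] with n hn
    field_simp
  have := ((h.add_const 1).sub (hinv.const_mul c)).inv₀ (by norm_num)
  rw [zero_add, mul_zero, sub_zero, inv_one] at this
  refine this.congr' (Eventually.of_forall fun n => ?_)
  field_simp [ht n]

theorem stmt_15_general (θ : ℕ → ℝ) (hpos : ∀ n, 0 < θ n)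
    (hC : Tendsto (fun n : ℕ => (n : ℝ) / θ n) atTop (nhds 0))
    (j : ℕ) :
    Tendsto (fun n : ℕ =>
        ((Nat.factorial n : ℝ) / (Nat.factorial (n - j) : ℝ)) *
          (Real.Gamma ((n : ℝ) + θ n - j) / Real.Gamma ((n : ℝ) + θ n)) *
          (θ n / n) ^ j)
      atTop (nhds 1) := by
  have hfactor : ∀ i ∈ range j, Tendsto (fun n : ℕ =>
      ((n : ℝ) - i) / n * (θ n / (n + θ n - (i + 1)))) atTop (𝓝 1) := fun i _ => by
    simpa using (tendsto_natCast_sub_div i).mul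
      (tendsto_div_add_sub_of_tendsto_natCast_div (fun n => (hpos n).ne') hC (i + 1))
  have hprod := tendsto_finsetProd (range j) hfactor
  rw [prod_const_one] at hprod
  refine hprod.congr' ?_
  filter_upwards [eventually_ge_atTop j] with n hn
  exact (factorial_div_mul_Gamma_div_mul_pow_eq_prod hn (hpos n)).symm

theorem stmt_15 (θ : ℕ → ℝ) (hpos : ∀ n, 0 < θ n) (hmono : Monotone θ)
    (hC : Tendsto (fun n : ℕ => (n : ℝ) / θ n) atTop (nhds 0))
    (j : ℕ) (hj : 1 ≤ j) :
    Tendsto (fun n : ℕ =>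
        ((Nat.factorial n : ℝ) / (Nat.factorial (n - j) : ℝ)) *
          (Real.Gamma ((n : ℝ) + θ n - j) / Real.Gamma ((n : ℝ) + θ n)) *
          (θ n / n) ^ j)
      atTop (nhds 1) :=
  stmt_15_general θ hpos hC j
end

section
/- Let θ : ℕ → ℝ be positive and nondecreasing with n²/θ_n → c as n → ∞ for some constant c ≥ 0. Then θ_n^n/(θ_n)_n = ∏_{j=0}^{n−1} θ_n/(θ_n+j) → e^{−c/2} as n → ∞. In particular, under the Ewens sampling formula with parameter θ_n, the probability P(C_1^n = n) = θ_n^n/(θ_n)_n that all n sampled individuals carry distinct alleles converges to e^{−c/2}. -/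
/-!
Taking logarithms, `log (θ / (θ + j)) = -j/θ + O(j²/θ²)`. Summing over `j < n`, the main terms
give `-n(n-1)/(2θ_n) → -c/2`, while the errors add up to at most `n³/θ_n² = (n²/θ_n)² / n → 0`.
-/

open Filter Finset Topology

namespace Real

lemma neg_div_le_log_div_add {a x : ℝ} (ha : 0 < a) (hx : 0 ≤ x) :
    -(x / a) ≤ log (a / (a + x)) := by
  have hax : 0 < a + x := by linarith
  calc -(x / a) = 1 - (a / (a + x))⁻¹ := by field_simp; ring
    _ ≤ log (a / (a + x)) := one_sub_inv_le_log_of_pos (div_pos ha hax)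

lemma log_div_add_le {a x : ℝ} (ha : 0 < a) (hx : 0 ≤ x) :
    log (a / (a + x)) ≤ -(x / a) + (x / a) ^ 2 := by
  have hax : 0 < a + x := by linarith
  calc log (a / (a + x)) ≤ a / (a + x) - 1 := log_le_sub_one_of_pos (div_pos ha hax)
    _ = -(x / a) + x ^ 2 / (a * (a + x)) := by field_simp; ring
    _ ≤ -(x / a) + (x / a) ^ 2 := by
      rw [div_pow, sq a]
      gcongr
      linarith

end Real

lemma sum_range_natCast (n : ℕ) : ∑ j ∈ range n, (j : ℝ) = n * (n - 1) / 2 := by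
  induction n with
  | zero => simp
  | succ k ih => rw [sum_range_succ, ih]; push_cast; ring

section LogSum

variable {a : ℝ}

lemma neg_le_sum_log_div_add (ha : 0 < a) (n : ℕ) :
    -(((n : ℝ) ^ 2 - n) / (2 * a)) ≤ ∑ j ∈ range n, Real.log (a / (a + j)) :=
  calc -(((n : ℝ) ^ 2 - n) / (2 * a)) = ∑ j ∈ range n, -((j : ℝ) / a) := by
        rw [sum_neg_distrib, ← sum_div, sum_range_natCast]; ring
    _ ≤ _ := sum_le_sum fun j _ => Real.neg_div_le_log_div_add ha j.cast_nonneg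

lemma sum_log_div_add_le (ha : 0 < a) (n : ℕ) :
    ∑ j ∈ range n, Real.log (a / (a + j)) ≤ -(((n : ℝ) ^ 2 - n) / (2 * a)) + (n : ℝ) ^ 3 / a ^ 2 :=
  calc ∑ j ∈ range n, Real.log (a / (a + j))
      ≤ ∑ j ∈ range n, (-((j : ℝ) / a) + ((n : ℝ) / a) ^ 2) := by
        refine sum_le_sum fun j hj => (Real.log_div_add_le ha j.cast_nonneg).trans ?_
        have hjn : (j : ℝ) ≤ n := by exact_mod_cast (mem_range.mp hj).le
        gcongr
    _ = -(((n : ℝ) ^ 2 - n) / (2 * a)) + (n : ℝ) ^ 3 / a ^ 2 := by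
        rw [sum_add_distrib, sum_neg_distrib, ← sum_div, sum_range_natCast, sum_const,
          card_range, nsmul_eq_mul]
        ring

end LogSum

section Asymptotics

variable {θ : ℕ → ℝ} {c : ℝ}

lemma tendsto_natCast_div_of_tendsto_sq_div
    (h : Tendsto (fun n : ℕ => (n : ℝ) ^ 2 / θ n) atTop (𝓝 c)) :
    Tendsto (fun n : ℕ => (n : ℝ) / θ n) atTop (𝓝 0) := by
  have h' := h.mul tendsto_one_div_atTop_nhds_zero_nat
  rw [mul_zero] at h'
  refine h'.congr' ?_
  filter_upwards [eventually_ne_atTop 0] with n hn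
  field_simp

lemma tendsto_cube_div_sq_of_tendsto_sq_div
    (h : Tendsto (fun n : ℕ => (n : ℝ) ^ 2 / θ n) atTop (𝓝 c)) :
    Tendsto (fun n : ℕ => (n : ℝ) ^ 3 / θ n ^ 2) atTop (𝓝 0) := by
  have h' := (h.pow 2).mul tendsto_one_div_atTop_nhds_zero_nat
  rw [mul_zero] at h'
  refine h'.congr' ?_
  filter_upwards [eventually_ne_atTop 0] with n hn
  field_simp

lemma tendsto_sum_log_div_add (hpos : ∀ n, 0 < θ n)
    (h : Tendsto (fun n : ℕ => (n : ℝ) ^ 2 / θ n) atTop (𝓝 c)) :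
    Tendsto (fun n : ℕ => ∑ j ∈ range n, Real.log (θ n / (θ n + j))) atTop (𝓝 (-c / 2)) := by
  have hmain : Tendsto (fun n : ℕ => -(((n : ℝ) ^ 2 - n) / (2 * θ n))) atTop (𝓝 (-c / 2)) := by
    have h' := ((h.sub (tendsto_natCast_div_of_tendsto_sq_div h)).div_const 2).neg
    rw [sub_zero, ← neg_div] at h'
    refine h'.congr fun n => ?_
    rw [div_sub_div_same, div_div, mul_comm (θ n)]
  have herr := hmain.add (tendsto_cube_div_sq_of_tendsto_sq_div h)
  rw [add_zero] at herr
  exact tendsto_of_tendsto_of_tendsto_of_le_of_le hmain herr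
    (fun n => neg_le_sum_log_div_add (hpos n) n) (fun n => sum_log_div_add_le (hpos n) n)

end Asymptotics

theorem stmt_16_general (θ : ℕ → ℝ) (hpos : ∀ n, 0 < θ n)
    (c : ℝ)
    (hC2 : Tendsto (fun n : ℕ => (n : ℝ) ^ 2 / θ n) atTop (nhds c)) :
    Tendsto (fun n : ℕ => ∏ j ∈ Finset.range n, θ n / (θ n + j))
      atTop (nhds (Real.exp (-c / 2))) := by
  refine ((Real.continuous_exp.tendsto _).comp (tendsto_sum_log_div_add hpos hC2)).congr
    fun n => ?_
  rw [Function.comp_apply, Real.exp_sum]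
  refine prod_congr rfl fun j _ => Real.exp_log ?_
  have := hpos n
  positivity

theorem stmt_16 (θ : ℕ → ℝ) (hpos : ∀ n, 0 < θ n) (hmono : Monotone θ)
    (c : ℝ) (hc : 0 ≤ c)
    (hC2 : Tendsto (fun n : ℕ => (n : ℝ) ^ 2 / θ n) atTop (nhds c)) :
    Tendsto (fun n : ℕ => ∏ j ∈ Finset.range n, θ n / (θ n + j))
      atTop (nhds (Real.exp (-c / 2))) :=
  stmt_16_general θ hpos c hC2
end
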